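/- Let W and V be B-DMCs with the same finite output alphabet Y, and assume V(y|x) > 0 for all y ∈ Y and x ∈ {0,1}. Let p₀ := q_W({y ∈ Y : Δ_V(y) = 0}). Then q_{W⁻}({(y₁,y₂) ∈ Y×Y : Δ_{V⁻}(y₁y₂) = 0}) = 2p₀ − p₀², and q_{W⁺}({(y₁,y₂,u₁) ∈ Y×Y×{0,1} : Δ_{V⁺}(y₁y₂u₁) = 0}) ≥ p₀². -/

import Mathlib

/-!
With the convention `0 / 0 = 0`, `Δ_V(y) = 0` exactly when `V(y|0)² = V(y|1)²`. For the minus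
transform the difference of the squared likelihoods factors as
`V⁻(y₁y₂|0)² - V⁻(y₁y₂|1)² = ¼ (V(y₁|0)² - V(y₁|1)²)(V(y₂|0)² - V(y₂|1)²)`, so
`Δ_{V⁻}(y₁y₂) = 0` iff `Δ_V(y₁) = 0` or `Δ_V(y₂) = 0`; since `q_{W⁻}(y₁y₂) = q_W(y₁) q_W(y₂)`,
the zero set has mass `1 - (1 - p₀)² = 2p₀ - p₀²`. For the plus transform, `Δ_V(y₁) = Δ_V(y₂) = 0`
already forces `Δ_{V⁺}(y₁y₂u₁) = 0`, and summing `q_{W⁺}` over `u₁` gives `q_W(y₁) q_W(y₂)`,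
whence the lower bound `p₀²`.
-/

open Finset
open scoped Classical

/-- A channel `W : {0,1} → Y` is a B-DMC if each row is a probability mass function. -/
def IsBDMC {Y : Type*} [Fintype Y] (W : Bool → Y → ℝ) : Prop :=
  (∀ x y, 0 ≤ W x y) ∧ (∀ x, ∑ y : Y, W x y = 1)

/-- The output distribution of a channel under uniform inputs. -/
noncomputable def qOut {Y : Type*} (W : Bool → Y → ℝ) (y : Y) : ℝ :=
  (W false y + W true y) / 2

/-- The Δ parameter of a channel (with the convention 0/0 = 0, automatic in Lean). -/
noncomputable def Δch {Y : Type*} (V : Bool → Y → ℝ) (y : Y) : ℝ :=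
  (V false y - V true y) / (V false y + V true y)

/-- The likelihood ratio of a channel. -/
noncomputable def LR {Y : Type*} (V : Bool → Y → ℝ) (y : Y) : ℝ :=
  V true y / V false y

/-- The mismatched mutual information `I(W, V)` (base-2 logarithm). -/
noncomputable def Imm {Y : Type*} [Fintype Y] (W V : Bool → Y → ℝ) : ℝ :=
  (1/2) * ∑ x : Bool, ∑ y : Y, W x y * Real.logb 2 (V x y / qOut V y)

/-- The mismatched ML decoding error probability `P_{e,ML}(W, V)`. -/
noncomputable def PeML {Y : Type*} [Fintype Y] (W V : Bool → Y → ℝ) : ℝ :=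
  (1/2) * ∑ y ∈ univ.filter (fun y => 1 < LR V y), W false y
  + (1/4) * ∑ y ∈ univ.filter (fun y => LR V y = 1), W false y
  + (1/2) * ∑ y ∈ univ.filter (fun y => LR V y < 1), W true y
  + (1/4) * ∑ y ∈ univ.filter (fun y => LR V y = 1), W true y

/-- The mismatched parameter `D(W, V)`. -/
noncomputable def Dpar {Y : Type*} [Fintype Y] (W V : Bool → Y → ℝ) : ℝ :=
  ∑ y : Y, qOut W y * Real.sqrt |Δch V y|

/-- The mismatched variational distance `T(W, V)`. -/
noncomputable def Tpar {Y : Type*} [Fintype Y] (W V : Bool → Y → ℝ) : ℝ :=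
  ∑ y : Y, qOut W y * |Δch V y|

/-- The mismatched parameter `T_k(W, V)`. -/
noncomputable def Tkpar {Y : Type*} [Fintype Y] (k : ℕ) (W V : Bool → Y → ℝ) : ℝ :=
  ∑ y : Y, qOut W y * |Δch V y| ^ k

/-- The mismatched Bhattacharyya parameter `Z(W, V)`. -/
noncomputable def Zpar {Y : Type*} [Fintype Y] (W V : Bool → Y → ℝ) : ℝ :=
  (1/2) * ∑ y : Y, W false y * Real.sqrt (LR V y)
  + (1/2) * ∑ y : Y, W true y * Real.sqrt (1 / LR V y)

/-- The minus polar transform `W⁻(y₁y₂ | u₁) = (1/2) ∑_{u₂} W(y₁|u₁⊕u₂) W(y₂|u₂)`. -/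
noncomputable def polarMinus {Y : Type*} (W : Bool → Y → ℝ) : Bool → Y × Y → ℝ :=
  fun u₁ p => (1/2) * ∑ u₂ : Bool, W (Bool.xor u₁ u₂) p.1 * W u₂ p.2

/-- The plus polar transform `W⁺(y₁y₂u₁ | u₂) = (1/2) W(y₁|u₁⊕u₂) W(y₂|u₂)`,
with output `(y₁, y₂, u₁)`. -/
noncomputable def polarPlus {Y : Type*} (W : Bool → Y → ℝ) : Bool → Y × Y × Bool → ℝ :=
  fun u₂ p => (1/2) * W (Bool.xor p.2.2 u₂) p.1 * W u₂ p.2.1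

section Channel

variable {Y : Type*}

theorem Δch_eq_zero_iff_sq_eq_sq (V : Bool → Y → ℝ) (y : Y) :
    Δch V y = 0 ↔ V false y ^ 2 = V true y ^ 2 := by
  rw [Δch, div_eq_zero_iff, sub_eq_zero, add_eq_zero_iff_eq_neg, sq_eq_sq_iff_eq_or_eq_neg]

theorem Δch_polarMinus_eq_zero_iff (V : Bool → Y → ℝ) (y₁ y₂ : Y) :
    Δch (polarMinus V) (y₁, y₂) = 0 ↔ Δch V y₁ = 0 ∨ Δch V y₂ = 0 := by
  have hfactor : polarMinus V false (y₁, y₂) ^ 2 - polarMinus V true (y₁, y₂) ^ 2 =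
      (V false y₁ ^ 2 - V true y₁ ^ 2) * (V false y₂ ^ 2 - V true y₂ ^ 2) / 4 := by
    simp only [polarMinus, Fintype.sum_bool, Bool.false_xor, Bool.true_xor, Bool.not_false,
      Bool.not_true]
    ring
  simp only [Δch_eq_zero_iff_sq_eq_sq, ← sub_eq_zero (a := polarMinus V false _ ^ 2), hfactor,
    div_eq_zero_iff, mul_eq_zero, sub_eq_zero]
  norm_num

theorem Δch_polarPlus_eq_zero {V : Bool → Y → ℝ} {y₁ y₂ : Y} (h₁ : Δch V y₁ = 0)
    (h₂ : Δch V y₂ = 0) (u₁ : Bool) : Δch (polarPlus V) (y₁, y₂, u₁) = 0 := by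
  rw [Δch_eq_zero_iff_sq_eq_sq] at *
  cases u₁ <;>
    simp only [polarPlus, mul_pow, Bool.xor_false, Bool.xor_true, Bool.not_false,
      Bool.not_true, h₁, h₂]

theorem qOut_polarMinus (W : Bool → Y → ℝ) (y₁ y₂ : Y) :
    qOut (polarMinus W) (y₁, y₂) = qOut W y₁ * qOut W y₂ := by
  simp only [qOut, polarMinus, Fintype.sum_bool, Bool.false_xor, Bool.true_xor, Bool.not_false,
    Bool.not_true]
  ring

theorem sum_qOut_polarPlus (W : Bool → Y → ℝ) (y₁ y₂ : Y) :
    ∑ u₁ : Bool, qOut (polarPlus W) (y₁, y₂, u₁) = qOut W y₁ * qOut W y₂ := by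
  simp only [qOut, polarPlus, Fintype.sum_bool, Bool.xor_false, Bool.xor_true, Bool.not_false,
    Bool.not_true]
  ring

theorem qOut_nonneg {W : Bool → Y → ℝ} (hW : ∀ x y, 0 ≤ W x y) (y : Y) : 0 ≤ qOut W y :=
  div_nonneg (add_nonneg (hW false y) (hW true y)) zero_le_two

theorem qOut_polarPlus_nonneg {W : Bool → Y → ℝ} (hW : ∀ x y, 0 ≤ W x y) (p : Y × Y × Bool) :
    0 ≤ qOut (polarPlus W) p :=
  qOut_nonneg (fun _ _ => mul_nonneg (mul_nonneg one_half_pos.le (hW _ _)) (hW _ _)) p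

theorem sum_qOut_eq_one [Fintype Y] {W : Bool → Y → ℝ} (hW : ∀ x, ∑ y : Y, W x y = 1) :
    ∑ y : Y, qOut W y = 1 := by
  simp only [qOut, ← sum_div, sum_add_distrib, hW]
  norm_num

end Channel

theorem sum_filter_or_mul {α R : Type*} [Fintype α] [CommRing R] (P : α → Prop)
    [DecidablePred P] (f : α → R) :
    ∑ p ∈ univ.filter (fun p : α × α => P p.1 ∨ P p.2), f p.1 * f p.2 =
      (∑ a, f a) ^ 2 - (∑ a ∈ univ.filter (fun a => ¬ P a), f a) ^ 2 := by
  have hcompl : univ.filter (fun p : α × α => ¬ (P p.1 ∨ P p.2)) =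
      univ.filter (fun a => ¬ P a) ×ˢ univ.filter (fun a => ¬ P a) := by
    ext p
    simp [not_or]
  rw [eq_sub_iff_add_eq, sq, sq, sum_mul_sum, sum_mul_sum, ← sum_product', ← sum_product',
    ← hcompl, univ_product_univ, sum_filter_add_sum_filter_not]

theorem qOut_delta_zero_polar_general {Y : Type*} [Fintype Y] (W V : Bool → Y → ℝ)
    (hW : IsBDMC W)
    (p₀ : ℝ) (hp₀ : p₀ = ∑ y ∈ univ.filter (fun y : Y => Δch V y = 0), qOut W y) :
    (∑ p ∈ univ.filter (fun p : Y × Y => Δch (polarMinus V) p = 0),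
        qOut (polarMinus W) p) = 2 * p₀ - p₀ ^ 2 ∧
    (∑ p ∈ univ.filter (fun p : Y × Y × Bool => Δch (polarPlus V) p = 0),
        qOut (polarPlus W) p) ≥ p₀ ^ 2 := by
  set S := univ.filter (fun y : Y => Δch V y = 0)
  have hcompl : ∑ y ∈ univ.filter (fun y : Y => ¬ Δch V y = 0), qOut W y = 1 - p₀ := by
    rw [hp₀, eq_sub_iff_add_eq, add_comm, sum_filter_add_sum_filter_not, sum_qOut_eq_one hW.2]
  constructor
  · calc _ = ∑ p ∈ univ.filter (fun p : Y × Y => Δch V p.1 = 0 ∨ Δch V p.2 = 0),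
            qOut W p.1 * qOut W p.2 :=
          sum_congr (filter_congr fun p _ => Δch_polarMinus_eq_zero_iff V p.1 p.2)
            fun p _ => qOut_polarMinus W p.1 p.2
      _ = 2 * p₀ - p₀ ^ 2 := by
          rw [sum_filter_or_mul (Δch V · = 0), hcompl, sum_qOut_eq_one hW.2]
          ring
  · have hsub : S ×ˢ S ×ˢ univ ⊆ univ.filter (fun p : Y × Y × Bool => Δch (polarPlus V) p = 0) :=
      fun ⟨y₁, y₂, u₁⟩ hp => by
        simp only [S, mem_product, mem_filter, mem_univ, true_and, and_true] at hp ⊢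
        exact Δch_polarPlus_eq_zero hp.1 hp.2 u₁
    calc p₀ ^ 2 = ∑ p ∈ S ×ˢ S ×ˢ univ, qOut (polarPlus W) p := by
          simp only [hp₀, sq, sum_mul_sum, sum_product, sum_qOut_polarPlus, S]
      _ ≤ _ := sum_le_sum_of_subset_of_nonneg hsub fun p _ _ => qOut_polarPlus_nonneg hW.1 p

/-- With `p₀ := q_W({y : Δ_V(y) = 0})`, the minus transform satisfies
`q_{W⁻}({Δ_{V⁻} = 0}) = 2 p₀ − p₀²` and the plus transform satisfies
`q_{W⁺}({Δ_{V⁺} = 0}) ≥ p₀²`. -/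
theorem qOut_delta_zero_polar {Y : Type*} [Fintype Y] (W V : Bool → Y → ℝ)
    (hW : IsBDMC W) (hV : IsBDMC V) (hVpos : ∀ x y, 0 < V x y)
    (p₀ : ℝ) (hp₀ : p₀ = ∑ y ∈ univ.filter (fun y : Y => Δch V y = 0), qOut W y) :
    (∑ p ∈ univ.filter (fun p : Y × Y => Δch (polarMinus V) p = 0),
        qOut (polarMinus W) p) = 2 * p₀ - p₀ ^ 2 ∧
    (∑ p ∈ univ.filter (fun p : Y × Y × Bool => Δch (polarPlus V) p = 0),
        qOut (polarPlus W) p) ≥ p₀ ^ 2 :=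
  qOut_delta_zero_polar_general W V hW p₀ hp₀
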